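/- Let Ψ_{ABCD} = λ o_A o_B o_C o_D be a nonzero type-N symmetric spinor and Φ_{ABA'B'} a Hermitian spinor symmetric in AB and in A'B' satisfying Φ_{A'B'(C}^{\;\;\;G} Ψ_{DEF)G} = 0. Then Φ_{ABA'B'} = φ · o_A o_B ō_{A'} ō_{B'} for some real scalar φ, where ō is the complex conjugate spinor of o. -/

import Mathlib

open scoped BigOperators

noncomputable section

/-- Components of a covector (one-index spinor) over spin space `S = ℂ²`. -/
abbrev Sp := Fin 2 → ℂ

/-- A 4-index spinor (all indices of the same 2-dimensional type). -/
abbrev Tensor4 := Fin 2 → Fin 2 → Fin 2 → Fin 2 → ℂ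

/-- The symplectic form ε, with ε₀₁ = 1 = -ε₁₀. -/
def eps : Fin 2 → Fin 2 → ℂ := ![![0, 1], ![-1, 0]]

/-- Index raising: `(up α) A = ε^{AB} α_B`. -/
def up (α : Sp) : Sp := fun A => ∑ B, eps A B * α B

/-- The ε-pairing `α_A β^A`. -/
def pair (α β : Sp) : ℂ := ∑ A, α A * up β A

/-- Complex conjugate spinor (components in the conjugate spin space). -/
def conjSp (α : Sp) : Sp := fun A => (starRingEnd ℂ) (α A)

/-- Total symmetrization of a 4-index spinor (with the 1/4! normalization). -/
def symz (T : Tensor4) : Tensor4 := fun A B C D =>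
  (1 / 24 : ℂ) * ∑ σ : Equiv.Perm (Fin 4),
    T (![A, B, C, D] (σ 0)) (![A, B, C, D] (σ 1)) (![A, B, C, D] (σ 2)) (![A, B, C, D] (σ 3))

/-- Symmetrized product `α_{(A} β_B γ_C δ_{D)}` of four one-index spinors. -/
def Sym4 (α β γ δ : Sp) : Tensor4 :=
  symz (fun A B C D => α A * β B * γ C * δ D)

/-- Total symmetry of a 4-index spinor. -/
def TotSym4 (Ψ : Tensor4) : Prop :=
  ∀ A B C D, Ψ A B C D = Ψ B A C D ∧ Ψ A B C D = Ψ A C B D ∧ Ψ A B C D = Ψ A B D C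

/-- The contraction `Ψ_{AD}{}^{BG} Ψ_{EFBG}` (indices raised with ε). -/
def Qc (Ψ : Tensor4) : Tensor4 := fun A D E F =>
  ∑ B, ∑ G, ∑ P, ∑ Q, eps B P * eps G Q * Ψ A D P Q * Ψ E F B G

/-! Contracting `Ψ = λ o⁴` with `Φ` leaves `λ (Φ_{CHA'B'} o^H) o_D o_E o_F`, and at the index values
`(C, a, a, a)` with `o_a ≠ 0` its symmetrization still isolates the factor `Φ_{CHA'B'} o^H`; so `o`
annihilates `Φ` in its second unprimed index. In two dimensions this makes `Φ_{ABA'B'}` proportional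
to `o_A o_B`, Hermiticity moves the same structure to the primed pair, and the coefficient is real
because `Φ_{aaaa}` is. -/

open Equiv

theorem Equiv.Perm.sum_comp_apply_zero {M : Type*} [AddCommMonoid M] (n : ℕ)
    (g : Fin (n + 1) → M) : ∑ σ : Perm (Fin (n + 1)), g (σ 0) = n.factorial • ∑ j, g j := by
  rw [← Perm.decomposeFin.symm.sum_comp]
  simp [Fintype.sum_prod_type, Perm.decomposeFin_symm_apply_zero, Fintype.card_perm,
    Finset.smul_sum]

theorem symz_apply_of_last_three_eq (T : Tensor4) (C a : Fin 2) :
    symz T C a a a = (T C a a a + T a C a a + T a a C a + T a a a C) / 4 := by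
  -- after inverting `σ`, each summand depends only on the slot `σ 0` that receives `C`
  have hv : ∀ (σ : Perm (Fin 4)) i, ![C, a, a, a] (σ⁻¹ i) = if i = σ 0 then C else a := by
    intro σ i
    have : ∀ k : Fin 4, ![C, a, a, a] k = if k = 0 then C else a := by decide +revert
    simp only [this, Perm.inv_eq_iff_eq]
  unfold symz
  rw [← Equiv.sum_comp (Equiv.inv (Perm (Fin 4)))]
  simp only [Equiv.inv_apply, hv]
  rw [Perm.sum_comp_apply_zero 3 (fun j => T (if 0 = j then C else a) (if 1 = j then C else a)
    (if 2 = j then C else a) (if 3 = j then C else a)), Fin.sum_univ_four]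
  simp only [Fin.reduceEq, ↓reduceIte, nsmul_eq_mul, Nat.factorial]
  push_cast
  ring

theorem eq_zero_of_symz_mul_cube_eq_zero {f g : Sp} {a : Fin 2} (ha : g a ≠ 0)
    (h : ∀ C, symz (fun C D E F => f C * (g D * g E * g F)) C a a a = 0) (C : Fin 2) :
    f C = 0 := by
  have hsymz := fun C => (symz_apply_of_last_three_eq _ C a).symm.trans (h C)
  have hfa : f a = 0 := by
    have : f a * g a ^ 3 = 0 := by linear_combination hsymz a
    exact (mul_eq_zero.mp this).resolve_right (pow_ne_zero 3 ha)
  have hfC : f C * g a ^ 3 = 0 := by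
    linear_combination 4 * hsymz C - 3 * g C * g a ^ 2 * hfa
  exact (mul_eq_zero.mp hfC).resolve_right (pow_ne_zero 3 ha)

theorem pair_apply (α β : Sp) : pair α β = α 0 * β 1 - α 1 * β 0 := by
  simp [pair, up, eps, Fin.sum_univ_two]
  ring

theorem pair_eq_zero_iff (α β : Sp) : pair α β = 0 ↔ ∀ A B, α A * β B = α B * β A := by
  rw [pair_apply, sub_eq_zero]
  refine ⟨fun h A B => ?_, fun h => h 0 1⟩
  fin_cases A <;> fin_cases B <;> simp [h, mul_comm]

theorem eq_mul_of_symm_of_pair_eq_zero {o : Sp} {a : Fin 2} (ha : o a ≠ 0)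
    (X : Fin 2 → Fin 2 → ℂ) (hsymm : ∀ A B, X A B = X B A) (hX : ∀ A, pair o (X A) = 0)
    (A B : Fin 2) : X A B = X a a / o a ^ 2 * o A * o B := by
  have hprop : ∀ A B, X A B * o a = X A a * o B := fun A B => by
    linear_combination -(pair_eq_zero_iff o (X A)).mp (hX A) B a
  field_simp
  linear_combination o a * hprop A B + o a * o B * hsymm A a + o B * hprop a A

theorem ne_zero_of_type_N {o : Sp} {lam : ℂ} {Ψ : Tensor4}
    (hΨ : ∀ A B C D, Ψ A B C D = lam * (o A * o B * o C * o D)) (hΨne : Ψ ≠ 0) :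
    lam ≠ 0 ∧ ∃ a, o a ≠ 0 := by
  obtain ⟨A, hA⟩ := Function.ne_iff.mp hΨne
  obtain ⟨B, hB⟩ := Function.ne_iff.mp hA
  obtain ⟨C, hC⟩ := Function.ne_iff.mp hB
  obtain ⟨D, hD⟩ := Function.ne_iff.mp hC
  simp only [hΨ, Pi.zero_apply, ne_eq, mul_eq_zero, not_or] at hD
  exact ⟨hD.1, A, hD.2.1.1.1⟩

theorem sum_eps_mul_type_N {o : Sp} {lam : ℂ} {Ψ : Tensor4}
    (hΨ : ∀ A B C D, Ψ A B C D = lam * (o A * o B * o C * o D)) (x : Sp) (D E F : Fin 2) :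
    ∑ G, ∑ H, eps G H * x H * Ψ D E F G = lam * pair o x * (o D * o E * o F) := by
  simp only [hΨ, pair_apply, Fin.sum_univ_two, eps, Matrix.cons_val_zero, Matrix.cons_val_one,
    Matrix.cons_val_fin_one]
  ring

theorem type_N_Ricci_spinor_form_general (o : Sp) (lam : ℂ) (Ψ Φ : Tensor4)
    (hΨ : ∀ A B C D, Ψ A B C D = lam * (o A * o B * o C * o D))
    (hΨne : Ψ ≠ 0)
    (hsymAB : ∀ A B A' B', Φ A B A' B' = Φ B A A' B')
    (hherm : ∀ A B A' B', Φ A B A' B' = (starRingEnd ℂ) (Φ A' B' A B))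
    (hcond : ∀ A' B' C D E F,
      symz (fun C D E F => ∑ G, ∑ H, eps G H * Φ C H A' B' * Ψ D E F G) C D E F = 0) :
    ∃ φ : ℝ, ∀ A B A' B',
      Φ A B A' B' = (φ : ℂ) * (o A * o B * conjSp o A' * conjSp o B') := by
  obtain ⟨hlam, a, ha⟩ := ne_zero_of_type_N hΨ hΨne
  have hpair : ∀ A' B' C, pair o (fun H => Φ C H A' B') = 0 := fun A' B' C => by
    have h := eq_zero_of_symz_mul_cube_eq_zero (f := fun C => lam * pair o (fun H => Φ C H A' B'))
      ha (fun C => by simpa only [sum_eps_mul_type_N hΨ] using hcond A' B' C a a a) C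
    exact (mul_eq_zero.mp h).resolve_left hlam
  have hunprimed : ∀ A B A' B', Φ A B A' B' = Φ a a A' B' / o a ^ 2 * o A * o B :=
    fun A B A' B' => eq_mul_of_symm_of_pair_eq_zero ha (fun A B => Φ A B A' B')
      (fun A B => hsymAB A B A' B') (hpair A' B') A B
  have hreal : (starRingEnd ℂ) (Φ a a a a) = Φ a a a a := (hherm a a a a).symm
  have hconj_ne : (starRingEnd ℂ) (o a) ≠ 0 := (map_ne_zero _).mpr ha
  refine ⟨(Φ a a a a).re / Complex.normSq (o a) ^ 2, fun A B A' B' => ?_⟩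
  rw [hunprimed A B, hherm a a, hunprimed A' B']
  simp only [map_mul, map_div₀, map_pow, hreal, conjSp]
  push_cast
  rw [Complex.conj_eq_iff_re.mp hreal, ← Complex.mul_conj]
  field_simp

/-- if `Ψ = λ o⁴` is nonzero type N and the Hermitian spinor Φ
(symmetric in AB and in A'B') satisfies `Φ_{A'B'(C}{}^G Ψ_{DEF)G} = 0`, then
`Φ_{ABA'B'} = φ o_A o_B ō_{A'} ō_{B'}` for some real φ. -/
theorem type_N_Ricci_spinor_form (o : Sp) (lam : ℂ) (Ψ Φ : Tensor4)
    (hΨ : ∀ A B C D, Ψ A B C D = lam * (o A * o B * o C * o D))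
    (hΨne : Ψ ≠ 0) (hlam : lam ≠ 0)
    (hsymAB : ∀ A B A' B', Φ A B A' B' = Φ B A A' B')
    (hsymA'B' : ∀ A B A' B', Φ A B A' B' = Φ A B B' A')
    (hherm : ∀ A B A' B', Φ A B A' B' = (starRingEnd ℂ) (Φ A' B' A B))
    (hcond : ∀ A' B' C D E F,
      symz (fun C D E F => ∑ G, ∑ H, eps G H * Φ C H A' B' * Ψ D E F G) C D E F = 0) :
    ∃ φ : ℝ, ∀ A B A' B',
      Φ A B A' B' = (φ : ℂ) * (o A * o B * conjSp o A' * conjSp o B') :=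
  type_N_Ricci_spinor_form_general o lam Ψ Φ hΨ hΨne hsymAB hherm hcond
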